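/- arXiv:2207.07377 — 3 statements merged into one kernel-verified Lean document; each statement's English description precedes it below -/
import Mathlib

section
/- Fix u ≥ 1, sites a = (−u,−1), b = (u,1), and a fixed x with x < −u. Let (p_n) be any sequence of nonzero reals converging to 0, and let (y_n) be a sequence of reals with y_n > 1 and |x+u|^{p_n} + |y_n+1|^{p_n} = |x−u|^{p_n} + |y_n−1|^{p_n} for every n. Then y_n converges to −x/u (the line point s(x) = −x/u). -/
/-!
Put `φ_p(w) = ((w+1)^p - (w-1)^p) / p`. Dividing by `p` makes `φ_p` strictly decreasing on `(1, ∞)`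
for every `p < 1`, `p ≠ 0`, since `φ_p'(w) = (w+1)^(p-1) - (w-1)^(p-1) < 0`, and as `p → 0` it
converges pointwise to `log (w+1) - log (w-1)`, which is again strictly decreasing. The bisector
equation reads `φ_p(y) = (C^p - A^p) / p` with `C = u - x`, `A = -x - u`, whose right side tends
to `log C - log A`; the limit point `s` therefore solves `(s+1)/(s-1) = C/A`, i.e. `s = -x/u`.
Monotonicity turns the pointwise convergence at points on either side of `s` into convergence
of the solutions `y_n`.
-/

open Filter Set Topology

theorem Filter.Tendsto.of_antitoneOn_of_tendsto_apply
    {α β ι : Type*} [LinearOrder α] [TopologicalSpace α] [OrderTopology α] [DenselyOrdered α]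
    [LinearOrder β] [TopologicalSpace β] [OrderClosedTopology β]
    {l : Filter ι} {f : ι → α → β} {g : α → β} {a s : α} {y : ι → α}
    (hf : ∀ᶠ n in l, AntitoneOn (f n) (Ioi a))
    (hfg : ∀ r ∈ Ioi a, Tendsto (fun n ↦ f n r) l (𝓝 (g r)))
    (hg : StrictAntiOn g (Ioi a)) (hs : a < s) (hy : ∀ᶠ n in l, a < y n)
    (hfy : Tendsto (fun n ↦ f n (y n)) l (𝓝 (g s))) :
    Tendsto y l (𝓝 s) := by
  rw [tendsto_order]
  constructor
  · intro b hb
    obtain ⟨r, hr, hrs⟩ := exists_between (max_lt hb hs)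
    have har : a < r := (le_max_right b a).trans_lt hr
    filter_upwards [hf, hy, hfy.eventually_lt (hfg r har) (hg har hs hrs)] with n hfn hyn hlt
    refine (le_max_left b a).trans_lt (hr.trans ?_)
    by_contra! hle
    exact (hfn hyn har hle).not_gt hlt
  · intro b hb
    have hab : a < b := hs.trans hb
    filter_upwards [hf, hy, (hfg b hab).eventually_lt hfy (hg hs hab hb)] with n hfn hyn hlt
    by_contra! hle
    exact (hfn hab hyn hle).not_gt hlt

namespace Real

theorem tendsto_rpow_sub_one_div_nhdsNE {t : ℝ} (ht : 0 < t) :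
    Tendsto (fun p : ℝ ↦ (t ^ p - 1) / p) (𝓝[≠] 0) (𝓝 (log t)) := by
  have h := (hasStrictDerivAt_const_rpow ht 0).hasDerivAt.tendsto_slope_zero
  simp only [rpow_zero, one_mul, zero_add, smul_eq_mul] at h
  exact h.congr fun p ↦ inv_mul_eq_div p _

theorem tendsto_rpow_sub_rpow_div_nhdsNE {a b : ℝ} (ha : 0 < a) (hb : 0 < b) :
    Tendsto (fun p : ℝ ↦ (a ^ p - b ^ p) / p) (𝓝[≠] 0) (𝓝 (log a - log b)) :=
  ((tendsto_rpow_sub_one_div_nhdsNE ha).sub (tendsto_rpow_sub_one_div_nhdsNE hb)).congr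
    fun p ↦ by ring

theorem strictAntiOn_log_add_one_sub_log_sub_one :
    StrictAntiOn (fun w ↦ log (w + 1) - log (w - 1)) (Ioi 1) := by
  intro v hv w hw hvw
  simp only [mem_Ioi] at hv hw ⊢
  rw [← log_div (by linarith) (by linarith), ← log_div (by linarith) (by linarith)]
  refine log_lt_log (div_pos (by linarith) (by linarith)) ?_
  rw [div_lt_div_iff₀ (by linarith) (by linarith)]
  linarith

end Real

open Real

noncomputable def bisectorDiff (p w : ℝ) : ℝ := ((w + 1) ^ p - (w - 1) ^ p) / p

theorem hasDerivAt_bisectorDiff {p w : ℝ} (hp : p ≠ 0) (hw : 1 < w) :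
    HasDerivAt (bisectorDiff p) ((w + 1) ^ (p - 1) - (w - 1) ^ (p - 1)) w := by
  have hplus := ((hasDerivAt_id' w).add_const 1).rpow_const (p := p) (Or.inl (by linarith))
  have hminus := ((hasDerivAt_id' w).sub_const 1).rpow_const (p := p) (Or.inl (by linarith))
  refine ((hplus.sub hminus).div_const p).congr_deriv ?_
  field_simp

theorem strictAntiOn_bisectorDiff {p : ℝ} (hp : p ≠ 0) (hp1 : p < 1) :
    StrictAntiOn (bisectorDiff p) (Ioi 1) := by
  refine strictAntiOn_of_hasDerivWithinAt_neg (convex_Ioi 1)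
    (fun w hw ↦ (hasDerivAt_bisectorDiff hp hw).continuousAt.continuousWithinAt)
    (fun w hw ↦ (hasDerivAt_bisectorDiff hp (by simpa using hw)).hasDerivWithinAt) ?_
  intro w hw
  rw [interior_Ioi, mem_Ioi] at hw
  exact sub_neg.2 (rpow_lt_rpow_of_neg (z := p - 1) (by linarith) (by linarith) (by linarith))

theorem tendsto_bisectorDiff {w : ℝ} (hw : 1 < w) :
    Tendsto (bisectorDiff · w) (𝓝[≠] 0) (𝓝 (log (w + 1) - log (w - 1))) :=
  tendsto_rpow_sub_rpow_div_nhdsNE (by linarith) (by linarith)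

/-- cell S₁: bisector points above `y = 1` over a fixed `x < −u`
converge to the line point `s(x) = −x/u` as `p → 0`. -/
theorem stmt8 (u x : ℝ) (hu : 1 ≤ u) (hx : x < -u)
    (p : ℕ → ℝ) (hp0 : ∀ n, p n ≠ 0) (hp : Tendsto p atTop (nhds 0))
    (y : ℕ → ℝ) (hy : ∀ n, 1 < y n)
    (hbis : ∀ n, |x + u| ^ (p n) + |y n + 1| ^ (p n)
                 = |x - u| ^ (p n) + |y n - 1| ^ (p n)) :
    Tendsto y atTop (nhds (-x / u)) := by
  have hu0 : 0 < u := by linarith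
  have hA : 0 < -x - u := by linarith
  have hC : 0 < u - x := by linarith
  have hp' : Tendsto p atTop (𝓝[≠] 0) := tendsto_nhdsWithin_iff.2 ⟨hp, .of_forall hp0⟩
  have hbisectorDiff n : bisectorDiff (p n) (y n) = ((u - x) ^ p n - (-x - u) ^ p n) / p n := by
    have h := hbis n
    rw [abs_of_neg (by linarith : x + u < 0), abs_of_neg (by linarith : x - u < 0),
      abs_of_pos (by linarith [hy n]), abs_of_pos (by linarith [hy n]), neg_add', neg_sub] at h
    rw [bisectorDiff]
    congr 1
    linarith
  have hlog : log (-x / u + 1) - log (-x / u - 1) = log (u - x) - log (-x - u) := by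
    rw [show -x / u + 1 = (u - x) / u by field_simp; ring,
      show -x / u - 1 = (-x - u) / u by field_simp,
      log_div hC.ne' hu0.ne', log_div hA.ne' hu0.ne']
    ring
  refine Tendsto.of_antitoneOn_of_tendsto_apply (f := fun n ↦ bisectorDiff (p n)) ?_
    (fun r hr ↦ (tendsto_bisectorDiff hr).comp hp') strictAntiOn_log_add_one_sub_log_sub_one
    ((one_lt_div hu0).2 (by linarith)) (.of_forall hy) ?_
  · filter_upwards [hp.eventually (gt_mem_nhds one_pos)] with n hn
    exact (strictAntiOn_bisectorDiff (hp0 n) hn).antitoneOn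
  · simp only [hbisectorDiff, hlog]
    exact (tendsto_rpow_sub_rpow_div_nhdsNE hC hA).comp hp'
end

section
/- Fix u ≥ 1 and x with x < −u. There exists ε > 0 such that for every real p with 0 < |p| < ε and every y > 1 satisfying (−u−x)^p − (u−x)^p = (y−1)^p − (y+1)^p, one has y < 2·(−x/u) + 3. -/
/-!
Write `A = -u - x`, `B = u - x` and `m = 2 (-x/u) + 3`. After division by `p`, the equation
says `((y+1)^p - (y-1)^p)/p = (B^p - A^p)/p`. As `p → 0` these power-difference quotients tend
to logarithms, and `log ((m+1)/(m-1)) < log (B/A)` (this is `A (m+1) < B (m-1)`), so for small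
`p` the right-hand side exceeds `((m+1)^p - (m-1)^p)/p`. For `p ≤ 1` the quotient
`((t+2)^p - t^p)/p` is antitone in `t`, which rules out `y ≥ m`.
-/

open Real Filter Topology Set

theorem hasDerivAt_const_rpow_zero {a : ℝ} (ha : 0 < a) :
    HasDerivAt (fun p : ℝ => a ^ p) (log a) 0 := by
  simpa using (hasStrictDerivAt_const_rpow ha 0).hasDerivAt

theorem tendsto_rpow_sub_rpow_div_nhdsNE_zero {a b : ℝ} (ha : 0 < a) (hb : 0 < b) :
    Tendsto (fun p : ℝ => (b ^ p - a ^ p) / p) (𝓝[≠] 0) (𝓝 (log b - log a)) := by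
  convert hasDerivAt_iff_tendsto_slope.1
    ((hasDerivAt_const_rpow_zero hb).sub (hasDerivAt_const_rpow_zero ha)) using 2 with p
  simp [slope_def_field]

theorem antitoneOn_rpow_add_sub_rpow_div {p c : ℝ} (hp : p ≤ 1) (hc : 0 ≤ c) :
    AntitoneOn (fun t : ℝ => ((t + c) ^ p - t ^ p) / p) (Ioi 0) := by
  rcases eq_or_ne p 0 with rfl | hp0
  · simp [AntitoneOn]
  have hderiv : ∀ t > 0, HasDerivAt (fun t : ℝ => ((t + c) ^ p - t ^ p) / p)
      ((t + c) ^ (p - 1) - t ^ (p - 1)) t := by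
    intro t ht
    have h1 : HasDerivAt (fun t : ℝ => (t + c) ^ p) (p * (t + c) ^ (p - 1)) t := by
      simpa using ((hasDerivAt_id t).add_const c).rpow_const (p := p) (Or.inl (by positivity))
    refine ((h1.sub (hasDerivAt_rpow_const (Or.inl ht.ne'))).div_const p).congr_deriv ?_
    rw [← mul_sub, mul_div_cancel_left₀ _ hp0]
  refine antitoneOn_of_hasDerivWithinAt_nonpos (convex_Ioi 0)
    (f' := fun t => (t + c) ^ (p - 1) - t ^ (p - 1))
    (fun t ht => (hderiv t ht).continuousAt.continuousWithinAt) ?_ ?_ <;>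
    rw [interior_Ioi]
  · exact fun t ht => (hderiv t ht).hasDerivWithinAt
  · exact fun t ht => sub_nonpos.2 (rpow_le_rpow_of_nonpos ht (by linarith) (by linarith))

theorem eventually_lt_of_rpow_sub_rpow_eq {a b m : ℝ} (ha : 0 < a) (hm : 1 < m)
    (hgap : a * (m + 1) < b * (m - 1)) :
    ∀ᶠ p in 𝓝[≠] (0 : ℝ), ∀ y, 1 < y → a ^ p - b ^ p = (y - 1) ^ p - (y + 1) ^ p → y < m := by
  have hb : 0 < b :=
    pos_of_mul_pos_left ((by positivity : 0 < a * (m + 1)).trans hgap) (by linarith)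
  have hlog : log (m + 1) - log (m - 1) < log b - log a := by
    have := log_lt_log (by positivity) hgap
    rw [log_mul ha.ne' (by positivity), log_mul hb.ne' (by linarith)] at this
    linarith
  have hlim := (tendsto_rpow_sub_rpow_div_nhdsNE_zero ha hb).sub
    (tendsto_rpow_sub_rpow_div_nhdsNE_zero (a := m - 1) (b := m + 1) (by linarith) (by linarith))
  filter_upwards [nhdsWithin_le_nhds (eventually_lt_nhds one_pos),
    hlim.eventually (eventually_gt_nhds (sub_pos.2 hlog))] with p hp1 hpgap y hy heq
  by_contra! hmy
  have hmono := antitoneOn_rpow_add_sub_rpow_div hp1.le zero_le_two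
    (show 0 < m - 1 by linarith) (show 0 < y - 1 by linarith) (by linarith)
  have heq' : (b ^ p - a ^ p) / p = ((y - 1 + 2) ^ p - (y - 1) ^ p) / p := by
    rw [show y - 1 + 2 = y + 1 by ring]
    congr 1
    linarith
  simp only [show m - 1 + 2 = m + 1 by ring] at hmono
  linarith

/-- in cell S₁ (`x < −u`, `y > 1`), for all `p` close enough to `0`
every bisector point on the vertical line at `x` satisfies `y < 2·s(x) + 3`, where
`s(x) = −x/u`. -/
theorem stmt14 (u x : ℝ) (hu : 1 ≤ u) (hx : x < -u) :
    ∃ ε > (0:ℝ), ∀ p : ℝ, 0 < |p| → |p| < ε → ∀ y : ℝ, 1 < y →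
      (-u - x) ^ p - (u - x) ^ p = (y - 1) ^ p - (y + 1) ^ p →
      y < 2 * (-x / u) + 3 := by
  have hu0 : 0 < u := by linarith
  set s := -x / u
  have hs : 1 < s := (one_lt_div hu0).2 (by linarith)
  have hgap : (-u - x) * (2 * s + 3 + 1) < (u - x) * (2 * s + 3 - 1) := by
    have hxs : -x = s * u := (div_mul_cancel₀ _ hu0.ne').symm
    rw [show -u - x = (s - 1) * u by linarith, show u - x = (s + 1) * u by linarith]
    nlinarith
  obtain ⟨ε, hε, hsmall⟩ := Metric.eventually_nhds_iff.1 <| eventually_nhdsWithin_iff.1 <|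
    eventually_lt_of_rpow_sub_rpow_eq (by linarith) (by linarith) hgap
  exact ⟨ε, hε, fun p hp0 hpε => hsmall (by simpa using hpε) (abs_pos.1 hp0)⟩
end

section
/- Let u > 1 and let p be a real number with 0 < p < 1. Then there is no real y satisfying (2u)^p + |y+1|^p = |y−1|^p. Consequently, for sites a = (−u,−1) and b = (u,1), the L_p bisector of a and b contains no point on the vertical line x = u, for any p ∈ (0,1). -/
lemma aux_rpow_add {a b p : ℝ} (ha : 0 ≤ a) (hb : 0 ≤ b) (hp : 0 ≤ p) (hp1 : p ≤ 1) :
    (a + b) ^ p ≤ a ^ p + b ^ p := by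
  have h := NNReal.rpow_add_le_add_rpow a.toNNReal b.toNNReal hp hp1
  have := NNReal.coe_le_coe.2 h
  push_cast at this
  rwa [Real.coe_toNNReal _ ha, Real.coe_toNNReal _ hb] at this

lemma aux_key (u p : ℝ) (hu : 1 < u) (hp1 : 0 < p) (hp2 : p < 1) (y : ℝ) :
    (2 * u) ^ p + |y + 1| ^ p ≠ |y - 1| ^ p := by
  intro h
  have h2 : |y - 1| ≤ |y + 1| + 2 := by
    have := abs_sub_abs_le_abs_sub (y - 1) (y + 1)
    have h3 : |(y - 1) - (y + 1)| = 2 := by rw [show (y-1)-(y+1) = -2 by ring]; norm_num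
    linarith
  have hle : |y - 1| ^ p ≤ (|y + 1| + 2) ^ p :=
    Real.rpow_le_rpow (abs_nonneg _) h2 hp1.le
  have hsub : (|y + 1| + 2) ^ p ≤ |y + 1| ^ p + 2 ^ p :=
    aux_rpow_add (abs_nonneg _) (by norm_num) hp1.le hp2.le
  have hlt : (2:ℝ) ^ p < (2 * u) ^ p :=
    Real.rpow_lt_rpow (by norm_num) (by linarith) hp1
  linarith

/-- for `u > 1` and `0 < p < 1` there is no `y` with
`(2u)^p + |y+1|^p = |y−1|^p`; consequently the `L_p` bisector of `(−u,−1)` and `(u,1)`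
contains no point on the vertical line `x = u`. -/
theorem stmt18 (u p : ℝ) (hu : 1 < u) (hp1 : 0 < p) (hp2 : p < 1) :
    (¬ ∃ y : ℝ, (2 * u) ^ p + |y + 1| ^ p = |y - 1| ^ p) ∧
    (∀ y : ℝ, |u + u| ^ p + |y + 1| ^ p ≠ |u - u| ^ p + |y - 1| ^ p) := by
  constructor
  · rintro ⟨y, hy⟩
    exact aux_key u p hu hp1 hp2 y hy
  · intro y h
    rw [sub_self, abs_zero, Real.zero_rpow hp1.ne', zero_add] at h
    have huu : |u + u| = 2 * u := by rw [abs_of_pos (by linarith)]; ring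
    rw [huu] at h
    exact aux_key u p hu hp1 hp2 y h
end
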